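/- Suppose the weighted undirected graph a on n nodes is connected. A tuple (X*, Y*, Z*, U*, W*) is an optimal solution of problem (CRR-opt) if and only if there exist Λ¹_i* ∈ ℝ^{m×q} and Λ²_i* ∈ ℝ^{r×q} (i = 1,…,n) such that (X*, Y*, Z*, U*, W*, Λ¹*, Λ²*) is an equilibrium of algorithm (CRR-alg), i.e., all the right-hand sides of (CRR-alg) vanish at this point (with all derivative-feedback terms set to zero). -/

import Mathlib

/-!
The constraints of (CRR-opt) are homogeneous and linear, so the feasible set is a subspace and a
feasible point is optimal iff its residual `R_i = A_{li} Y_{vi} − [F_{vi}]_R − U_i` is orthogonal,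
summed over `i`, to `A_{li} ΔY_{vi} − ΔU_i` for every feasible direction `Δ`.

The equilibrium equations say that `Λ¹ = R`, that `Λ¹` and `Λ²` lie in the kernel of the graph
Laplacian `L`, that `Λ²_i B_{vi}ᵀ = 0` and that `(Λ²_i)^{vi} = −A_{li}ᵀ R_i`. Pairing these with a
feasible direction and using the symmetry of `L` gives the orthogonality. Conversely, the
directions `(ΔU, ΔW) = (L E, E)` force `L R = 0`, and `Λ² := ([−A_{lk}ᵀ R_k]_k)` satisfies
`Λ² B_{vi}ᵀ = 0` because any change of `X_{li}` can be compensated through `Z`: on a connected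
graph, `L` maps onto the families with zero sum, its range being the orthogonal complement of its
kernel, the constants.
-/

open Matrix

/-- Squared Frobenius norm of a real matrix: `‖M‖_F² = tr (Mᵀ M)`. -/
noncomputable def frobSq {α β : Type*} [Fintype α] [Fintype β] (M : Matrix α β ℝ) : ℝ :=
  Matrix.trace (Mᵀ * M)

/-- Frobenius inner product of real matrices: `⟨M,N⟩_F = tr (Mᵀ N)`. -/
noncomputable def frobInner {α β : Type*} [Fintype α] [Fintype β] (M N : Matrix α β ℝ) : ℝ :=
  Matrix.trace (Mᵀ * N)

/-- The weighted undirected graph with adjacency matrix `a` is connected: any two nodes are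
joined by a path of adjacent nodes (nodes `u ≠ v` are adjacent iff `a u v > 0`). -/
def GraphConnected {n : ℕ} (a : Matrix (Fin n) (Fin n) ℝ) : Prop :=
  ∀ i j : Fin n, Relation.ReflTransGen (fun u v : Fin n => u ≠ v ∧ 0 < a u v) i j

/-- Assemble a family of row blocks `M i ∈ ℝ^{d i × β}` into one matrix. -/
def blockRows {n : ℕ} {d : Fin n → ℕ} {β : Type*} (M : ∀ i, Matrix (Fin (d i)) β ℝ) :
    Matrix ((i : Fin n) × Fin (d i)) β ℝ :=
  Matrix.of fun s j => M s.1 s.2 j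

/-- Assemble a family of column blocks `M i ∈ ℝ^{α × d i}` into one matrix. -/
def blockCols {n : ℕ} {d : Fin n → ℕ} {α : Type*} (M : ∀ i, Matrix α (Fin (d i)) ℝ) :
    Matrix α ((i : Fin n) × Fin (d i)) ℝ :=
  Matrix.of fun k s => M s.1 k s.2

/-- The `i`-th row block of a matrix whose rows are partitioned according to `d`. -/
def rowBlk {n : ℕ} {d : Fin n → ℕ} {β : Type*}
    (Y : Matrix ((i : Fin n) × Fin (d i)) β ℝ) (i : Fin n) :
    Matrix (Fin (d i)) β ℝ :=
  Matrix.of fun k j => Y ⟨i, k⟩ j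

/-- `[M]_R`: the matrix whose `i`-th row block is `M` and whose other row blocks are zero. -/
def embedRow {n : ℕ} {d : Fin n → ℕ} {β : Type*} (i : Fin n)
    (M : Matrix (Fin (d i)) β ℝ) :
    Matrix ((i' : Fin n) × Fin (d i')) β ℝ :=
  Matrix.of fun s j => if h : s.1 = i then M (Fin.cast (congrArg d h) s.2) j else 0

/-- `[M]_C`: the matrix whose `i`-th column block is `M` and whose other column blocks are zero. -/
def embedCol {n : ℕ} {d : Fin n → ℕ} {α : Type*} (i : Fin n)
    (M : Matrix α (Fin (d i)) ℝ) :
    Matrix α ((i' : Fin n) × Fin (d i')) ℝ :=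
  Matrix.of fun k s => if h : s.1 = i then M k (Fin.cast (congrArg d h) s.2) else 0

/-- Feasibility for problem (CRR-opt). -/
def CRRfeas {n q : ℕ} {rdim mdim pdim : Fin n → ℕ}
    (a : Matrix (Fin n) (Fin n) ℝ)
    (Bv : ∀ i, Matrix (Fin (pdim i)) (Fin q) ℝ)
    (Xl : ∀ i, Matrix ((i' : Fin n) × Fin (rdim i')) (Fin (pdim i)) ℝ)
    (Yv : ∀ i, Matrix (Fin (rdim i)) (Fin q) ℝ)
    (Z : Fin n → Matrix ((i : Fin n) × Fin (rdim i)) (Fin q) ℝ)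
    (U W : Fin n → Matrix ((i : Fin n) × Fin (mdim i)) (Fin q) ℝ) : Prop :=
  (∀ i, embedRow i (Yv i) - Xl i * Bv i - ∑ j, a i j • (Z i - Z j) = 0) ∧
  (∀ i, U i = ∑ j, a i j • (W i - W j))

/-- Objective of problem (CRR-opt): `Σ_i ‖A_{li} Y_{vi} − [F_{vi}]_R − U_i‖_F²`. -/
noncomputable def CRRobj {n q : ℕ} {rdim mdim : Fin n → ℕ}
    (Al : ∀ i, Matrix ((i' : Fin n) × Fin (mdim i')) (Fin (rdim i)) ℝ)
    (Fv : ∀ i, Matrix (Fin (mdim i)) (Fin q) ℝ)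
    (Yv : ∀ i, Matrix (Fin (rdim i)) (Fin q) ℝ)
    (U : Fin n → Matrix ((i : Fin n) × Fin (mdim i)) (Fin q) ℝ) : ℝ :=
  ∑ i, frobSq (Al i * Yv i - embedRow i (Fv i) - U i)

/-- Right-hand side of the `X_{li}`-equation in algorithm (CRR-alg). -/
noncomputable def CRRrhsX {n q : ℕ} {rdim pdim : Fin n → ℕ}
    (Bv : ∀ i, Matrix (Fin (pdim i)) (Fin q) ℝ)
    (L2 : Fin n → Matrix ((i : Fin n) × Fin (rdim i)) (Fin q) ℝ) (i : Fin n) :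
    Matrix ((i' : Fin n) × Fin (rdim i')) (Fin (pdim i)) ℝ :=
  L2 i * (Bv i)ᵀ

/-- Right-hand side of the `Y_{vi}`-equation in algorithm (CRR-alg). -/
noncomputable def CRRrhsY {n q : ℕ} {rdim mdim : Fin n → ℕ}
    (Al : ∀ i, Matrix ((i' : Fin n) × Fin (mdim i')) (Fin (rdim i)) ℝ)
    (Fv : ∀ i, Matrix (Fin (mdim i)) (Fin q) ℝ)
    (Yv : ∀ i, Matrix (Fin (rdim i)) (Fin q) ℝ)
    (U : Fin n → Matrix ((i : Fin n) × Fin (mdim i)) (Fin q) ℝ)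
    (L2 : Fin n → Matrix ((i : Fin n) × Fin (rdim i)) (Fin q) ℝ) (i : Fin n) :
    Matrix (Fin (rdim i)) (Fin q) ℝ :=
  -((Al i)ᵀ * (Al i * Yv i - embedRow i (Fv i) - U i)) - rowBlk (L2 i) i

/-- Right-hand side of the `U_i`-equation in algorithm (CRR-alg). -/
noncomputable def CRRrhsU {n q : ℕ} {rdim mdim : Fin n → ℕ}
    (Al : ∀ i, Matrix ((i' : Fin n) × Fin (mdim i')) (Fin (rdim i)) ℝ)
    (Fv : ∀ i, Matrix (Fin (mdim i)) (Fin q) ℝ)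
    (Yv : ∀ i, Matrix (Fin (rdim i)) (Fin q) ℝ)
    (U L1 : Fin n → Matrix ((i : Fin n) × Fin (mdim i)) (Fin q) ℝ) (i : Fin n) :
    Matrix ((i : Fin n) × Fin (mdim i)) (Fin q) ℝ :=
  Al i * Yv i - embedRow i (Fv i) - U i - L1 i

/-- Right-hand side of the `W_i`-equation in algorithm (CRR-alg). -/
noncomputable def CRRrhsW {n q : ℕ} {mdim : Fin n → ℕ}
    (a : Matrix (Fin n) (Fin n) ℝ)
    (L1 : Fin n → Matrix ((i : Fin n) × Fin (mdim i)) (Fin q) ℝ) (i : Fin n) :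
    Matrix ((i : Fin n) × Fin (mdim i)) (Fin q) ℝ :=
  ∑ j, a i j • (L1 i - L1 j)

/-- Right-hand side of the `Z_i`-equation in algorithm (CRR-alg). -/
noncomputable def CRRrhsZ {n q : ℕ} {rdim : Fin n → ℕ}
    (a : Matrix (Fin n) (Fin n) ℝ)
    (L2 : Fin n → Matrix ((i : Fin n) × Fin (rdim i)) (Fin q) ℝ) (i : Fin n) :
    Matrix ((i : Fin n) × Fin (rdim i)) (Fin q) ℝ :=
  ∑ j, a i j • (L2 i - L2 j)

/-- Right-hand side of the `Λ¹_i`-equation in algorithm (CRR-alg), with the derivative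
feedback replaced by the right-hand side that determines it. -/
noncomputable def CRRrhsL1 {n q : ℕ} {rdim mdim : Fin n → ℕ}
    (a : Matrix (Fin n) (Fin n) ℝ)
    (Al : ∀ i, Matrix ((i' : Fin n) × Fin (mdim i')) (Fin (rdim i)) ℝ)
    (Fv : ∀ i, Matrix (Fin (mdim i)) (Fin q) ℝ)
    (Yv : ∀ i, Matrix (Fin (rdim i)) (Fin q) ℝ)
    (U W L1 : Fin n → Matrix ((i : Fin n) × Fin (mdim i)) (Fin q) ℝ) (i : Fin n) :
    Matrix ((i : Fin n) × Fin (mdim i)) (Fin q) ℝ :=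
  U i + CRRrhsU Al Fv Yv U L1 i - ∑ j, a i j • (W i - W j) - ∑ j, a i j • (L1 i - L1 j)

/-- Right-hand side of the `Λ²_i`-equation in algorithm (CRR-alg), with the derivative
feedbacks replaced by the right-hand sides that determine them. -/
noncomputable def CRRrhsL2 {n q : ℕ} {rdim mdim pdim : Fin n → ℕ}
    (a : Matrix (Fin n) (Fin n) ℝ)
    (Al : ∀ i, Matrix ((i' : Fin n) × Fin (mdim i')) (Fin (rdim i)) ℝ)
    (Bv : ∀ i, Matrix (Fin (pdim i)) (Fin q) ℝ)
    (Fv : ∀ i, Matrix (Fin (mdim i)) (Fin q) ℝ)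
    (Xl : ∀ i, Matrix ((i' : Fin n) × Fin (rdim i')) (Fin (pdim i)) ℝ)
    (Yv : ∀ i, Matrix (Fin (rdim i)) (Fin q) ℝ)
    (Z : Fin n → Matrix ((i : Fin n) × Fin (rdim i)) (Fin q) ℝ)
    (U : Fin n → Matrix ((i : Fin n) × Fin (mdim i)) (Fin q) ℝ)
    (L2 : Fin n → Matrix ((i : Fin n) × Fin (rdim i)) (Fin q) ℝ) (i : Fin n) :
    Matrix ((i : Fin n) × Fin (rdim i)) (Fin q) ℝ :=
  embedRow i (Yv i) + embedRow i (CRRrhsY Al Fv Yv U L2 i) - Xl i * Bv i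
    - ∑ j, a i j • (Z i - Z j) - ∑ j, a i j • (L2 i - L2 j)
    - CRRrhsX Bv L2 i * Bv i

/-- Equilibrium of algorithm (CRR-alg): all right-hand sides vanish. -/
noncomputable def CRRequil {n q : ℕ} {rdim mdim pdim : Fin n → ℕ}
    (a : Matrix (Fin n) (Fin n) ℝ)
    (Al : ∀ i, Matrix ((i' : Fin n) × Fin (mdim i')) (Fin (rdim i)) ℝ)
    (Bv : ∀ i, Matrix (Fin (pdim i)) (Fin q) ℝ)
    (Fv : ∀ i, Matrix (Fin (mdim i)) (Fin q) ℝ)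
    (Xl : ∀ i, Matrix ((i' : Fin n) × Fin (rdim i')) (Fin (pdim i)) ℝ)
    (Yv : ∀ i, Matrix (Fin (rdim i)) (Fin q) ℝ)
    (Z : Fin n → Matrix ((i : Fin n) × Fin (rdim i)) (Fin q) ℝ)
    (U W L1 : Fin n → Matrix ((i : Fin n) × Fin (mdim i)) (Fin q) ℝ)
    (L2 : Fin n → Matrix ((i : Fin n) × Fin (rdim i)) (Fin q) ℝ) : Prop :=
  ∀ i, CRRrhsX Bv L2 i = 0 ∧ CRRrhsY Al Fv Yv U L2 i = 0 ∧
    CRRrhsU Al Fv Yv U L1 i = 0 ∧ CRRrhsW a L1 i = 0 ∧ CRRrhsZ a L2 i = 0 ∧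
    CRRrhsL1 a Al Fv Yv U W L1 i = 0 ∧ CRRrhsL2 a Al Bv Fv Xl Yv Z U L2 i = 0

section Frobenius

variable {α β γ : Type*} [Fintype α] [Fintype β] [Fintype γ]

lemma frobInner_eq_sum (M N : Matrix α β ℝ) : frobInner M N = ∑ i, ∑ j, M i j * N i j := by
  simp only [frobInner, Matrix.trace, Matrix.diag, Matrix.mul_apply, Matrix.transpose_apply]
  exact Finset.sum_comm

lemma frobInner_comm (M N : Matrix α β ℝ) : frobInner M N = frobInner N M := by
  rw [frobInner, frobInner, ← Matrix.trace_transpose, Matrix.transpose_mul,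
    Matrix.transpose_transpose]

lemma frobInner_add_right (M N P : Matrix α β ℝ) :
    frobInner M (N + P) = frobInner M N + frobInner M P := by
  simp only [frobInner, Matrix.mul_add, Matrix.trace_add]

lemma frobInner_add_left (M N P : Matrix α β ℝ) :
    frobInner (M + N) P = frobInner M P + frobInner N P := by
  simp only [frobInner, Matrix.transpose_add, Matrix.add_mul, Matrix.trace_add]

lemma frobInner_sub_right (M N P : Matrix α β ℝ) :
    frobInner M (N - P) = frobInner M N - frobInner M P := by
  simp only [frobInner, Matrix.mul_sub, Matrix.trace_sub]

lemma frobInner_sub_left (M N P : Matrix α β ℝ) :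
    frobInner (M - N) P = frobInner M P - frobInner N P := by
  simp only [frobInner, Matrix.transpose_sub, Matrix.sub_mul, Matrix.trace_sub]

lemma frobInner_neg_left (M N : Matrix α β ℝ) : frobInner (-M) N = -frobInner M N := by
  simp only [frobInner, Matrix.transpose_neg, Matrix.neg_mul, Matrix.trace_neg]

lemma frobInner_neg_right (M N : Matrix α β ℝ) : frobInner M (-N) = -frobInner M N := by
  rw [frobInner_comm, frobInner_neg_left, frobInner_comm]

lemma frobInner_smul_right (t : ℝ) (M N : Matrix α β ℝ) :
    frobInner M (t • N) = t * frobInner M N := by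
  simp only [frobInner, Matrix.mul_smul, Matrix.trace_smul, smul_eq_mul]

lemma frobInner_smul_left (t : ℝ) (M N : Matrix α β ℝ) :
    frobInner (t • M) N = t * frobInner M N := by
  rw [frobInner_comm, frobInner_smul_right, frobInner_comm]

lemma frobInner_sum_right {ι : Type*} (s : Finset ι) (M : Matrix α β ℝ)
    (N : ι → Matrix α β ℝ) :
    frobInner M (∑ k ∈ s, N k) = ∑ k ∈ s, frobInner M (N k) := by
  simp only [frobInner, Matrix.mul_sum, Matrix.trace_sum]

lemma frobInner_sum_left {ι : Type*} (s : Finset ι) (M : ι → Matrix α β ℝ)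
    (N : Matrix α β ℝ) :
    frobInner (∑ k ∈ s, M k) N = ∑ k ∈ s, frobInner (M k) N := by
  simp only [frobInner, Matrix.transpose_sum, Matrix.sum_mul, Matrix.trace_sum]

lemma frobInner_zero_left (M : Matrix α β ℝ) : frobInner 0 M = 0 := by
  simp [frobInner]

lemma frobInner_mul_right_eq_transpose_mul (M : Matrix α β ℝ) (A : Matrix α γ ℝ)
    (Y : Matrix γ β ℝ) :
    frobInner M (A * Y) = frobInner (Aᵀ * M) Y := by
  simp only [frobInner, Matrix.transpose_mul, Matrix.transpose_transpose, Matrix.mul_assoc]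

lemma frobInner_mul_right_eq_mul_transpose (M : Matrix α β ℝ) (G : Matrix α γ ℝ)
    (B : Matrix γ β ℝ) :
    frobInner M (G * B) = frobInner (M * Bᵀ) G := by
  rw [frobInner, frobInner, Matrix.transpose_mul, Matrix.transpose_transpose, ← Matrix.mul_assoc,
    Matrix.trace_mul_cycle]

lemma frobSq_nonneg (M : Matrix α β ℝ) : 0 ≤ frobSq M := by
  simpa [frobSq] using (Matrix.posSemidef_conjTranspose_mul_self M).trace_nonneg

lemma frobSq_eq_zero_iff {M : Matrix α β ℝ} : frobSq M = 0 ↔ M = 0 := by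
  simpa [frobSq] using Matrix.trace_conjTranspose_mul_self_eq_zero_iff (A := M)

lemma frobSq_add_smul (M N : Matrix α β ℝ) (t : ℝ) :
    frobSq (M + t • N) = frobSq M + 2 * frobInner M N * t + frobSq N * t ^ 2 := by
  change frobInner (M + t • N) (M + t • N) = frobInner M M + 2 * frobInner M N * t
    + frobInner N N * t ^ 2
  simp only [frobInner_add_left, frobInner_add_right, frobInner_smul_left, frobInner_smul_right]
  rw [frobInner_comm N M]
  ring

/-- A quadratic `c + b t + a t²` with `a ≥ 0` is minimal at `t = 0` iff `b = 0`. -/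
lemma forall_sum_frobSq_le_add_smul_iff {ι : Type*} [Fintype ι] (M N : ι → Matrix α β ℝ) :
    (∀ t : ℝ, ∑ i, frobSq (M i) ≤ ∑ i, frobSq (M i + t • N i)) ↔
      ∑ i, frobInner (M i) (N i) = 0 := by
  have expand : ∀ t : ℝ, ∑ i, frobSq (M i + t • N i) = ∑ i, frobSq (M i)
      + 2 * (∑ i, frobInner (M i) (N i)) * t + (∑ i, frobSq (N i)) * t ^ 2 := fun t => by
    simp only [frobSq_add_smul, Finset.sum_add_distrib, ← Finset.sum_mul, Finset.mul_sum]
  have hN : 0 ≤ ∑ i, frobSq (N i) := Finset.sum_nonneg fun i _ => frobSq_nonneg (N i)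
  simp only [expand, le_add_iff_nonneg_right, add_assoc]
  constructor
  · intro h
    have := discrim_le_zero (a := ∑ i, frobSq (N i)) (b := 2 * ∑ i, frobInner (M i) (N i))
      (c := 0) fun t => by linarith [h t, sq t]
    rw [discrim] at this
    nlinarith [sq_nonneg (2 * ∑ i, frobInner (M i) (N i))]
  · intro h t
    rw [h, mul_zero, zero_mul, zero_add]
    exact mul_nonneg hN (sq_nonneg t)

end Frobenius

section GraphLaplacian

variable {ι : Type*} [Fintype ι] (a : Matrix ι ι ℝ)

def graphLap {M : Type*} [AddCommGroup M] [Module ℝ M] : (ι → M) →ₗ[ℝ] (ι → M) where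
  toFun x i := ∑ j, a i j • (x i - x j)
  map_add' x y := by
    ext i
    simp only [Pi.add_apply, add_sub_add_comm, smul_add, Finset.sum_add_distrib]
  map_smul' c x := by
    ext i
    simp only [Pi.smul_apply, ← smul_sub, smul_comm (a i _) c, Finset.smul_sum,
      RingHom.id_apply]

lemma graphLap_apply {M : Type*} [AddCommGroup M] [Module ℝ M] (x : ι → M) (i : ι) :
    graphLap a x i = ∑ j, a i j • (x i - x j) := rfl

def graphLapMatrix [DecidableEq ι] : Matrix ι ι ℝ :=
  diagonal (fun i => ∑ j, a i j) - a

variable {a}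

lemma sum_frobInner_graphLap {α β : Type*} [Fintype α] [Fintype β]
    (hsym : ∀ i j, a i j = a j i) (x y : ι → Matrix α β ℝ) :
    ∑ i, frobInner (x i) (graphLap a y i) = ∑ i, frobInner (graphLap a x i) (y i) := by
  have hswap : ∑ i, ∑ j, a i j * frobInner (x i) (y j)
      = ∑ i, ∑ j, a i j * frobInner (x j) (y i) := by
    rw [Finset.sum_comm]
    exact Finset.sum_congr rfl fun i _ => Finset.sum_congr rfl fun j _ => by rw [hsym]
  simp only [graphLap_apply, frobInner_sum_right, frobInner_sum_left, frobInner_smul_right,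
    frobInner_smul_left, frobInner_sub_right, frobInner_sub_left, mul_sub, Finset.sum_sub_distrib,
    hswap]

lemma two_mul_sum_mul_graphLap (hsym : ∀ i j, a i j = a j i) (x : ι → ℝ) :
    2 * ∑ i, x i * graphLap a x i = ∑ i, ∑ j, a i j * (x i - x j) ^ 2 := by
  have hexpand : ∑ i, x i * graphLap a x i = ∑ i, ∑ j, a i j * (x i * (x i - x j)) :=
    Finset.sum_congr rfl fun i _ => by
      rw [graphLap_apply, Finset.mul_sum]
      exact Finset.sum_congr rfl fun j _ => by rw [smul_eq_mul]; ring
  have hswap : ∑ i, ∑ j, a i j * (x j * (x j - x i))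
      = ∑ i, ∑ j, a i j * (x i * (x i - x j)) := by
    rw [Finset.sum_comm]
    exact Finset.sum_congr rfl fun i _ => Finset.sum_congr rfl fun j _ => by rw [hsym]
  rw [hexpand, two_mul]
  nth_rewrite 2 [← hswap]
  rw [← Finset.sum_add_distrib]
  exact Finset.sum_congr rfl fun i _ => by
    rw [← Finset.sum_add_distrib]
    exact Finset.sum_congr rfl fun j _ => by ring

lemma eq_of_graphLap_eq_zero (hsym : ∀ i j, a i j = a j i) (hnonneg : ∀ i j, 0 ≤ a i j)
    (hconn : ∀ i j, Relation.ReflTransGen (fun u v => 0 < a u v) i j) {x : ι → ℝ}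
    (hx : graphLap a x = 0) (i j : ι) : x i = x j := by
  have hterms : ∀ i j, a i j * (x i - x j) ^ 2 = 0 := by
    have hsum := two_mul_sum_mul_graphLap hsym x
    simp only [hx, Pi.zero_apply, mul_zero, Finset.sum_const_zero] at hsum
    have hnn : ∀ i j, 0 ≤ a i j * (x i - x j) ^ 2 := fun i j =>
      mul_nonneg (hnonneg i j) (sq_nonneg _)
    intro i j
    have := (Fintype.sum_eq_zero_iff_of_nonneg fun i => Finset.sum_nonneg fun j _ => hnn i j).1
      hsum.symm
    exact congrFun ((Fintype.sum_eq_zero_iff_of_nonneg (hnn i)).1 (congrFun this i)) j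
  induction hconn i j with
  | refl => rfl
  | tail _ hadj ih =>
    rw [ih]
    exact sub_eq_zero.1 <| (pow_eq_zero_iff two_ne_zero).1 <|
      (mul_eq_zero.1 (hterms _ _)).resolve_left hadj.ne'

lemma isHermitian_graphLapMatrix [DecidableEq ι] (hsym : ∀ i j, a i j = a j i) :
    (graphLapMatrix a).IsHermitian := by
  refine (isHermitian_diagonal _).sub ?_
  ext i j
  simp [hsym]

lemma graphLap_eq_mulVec [DecidableEq ι] (x : ι → ℝ) :
    graphLap a x = graphLapMatrix a *ᵥ x := by
  ext i
  rw [graphLapMatrix, sub_mulVec, Pi.sub_apply, mulVec_diagonal]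
  simp [graphLap_apply, mulVec, dotProduct, mul_sub, Finset.sum_mul]

/-- The Laplacian of a connected graph is symmetric with kernel the constants, so its range is the
orthogonal complement of the constants. -/
lemma exists_graphLap_eq (hsym : ∀ i j, a i j = a j i) (hnonneg : ∀ i j, 0 ≤ a i j)
    (hconn : ∀ i j, Relation.ReflTransGen (fun u v => 0 < a u v) i j) (m : ι → ℝ)
    (hm : ∑ i, m i = 0) : ∃ z : ι → ℝ, graphLap a z = m := by
  classical
  set T := toEuclideanLin (graphLapMatrix a)
  have hT : T.IsSymmetric := isSymmetric_toEuclideanLin_iff.2 (isHermitian_graphLapMatrix hsym)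
  have hrange : LinearMap.range T = (LinearMap.ker T)ᗮ := by
    rw [← hT.orthogonal_range, Submodule.orthogonal_orthogonal]
  have hm' : WithLp.toLp 2 m ∈ LinearMap.range T := by
    rw [hrange]
    intro x hx
    have hx' : graphLap a x.ofLp = 0 := by
      rw [graphLap_eq_mulVec]
      simpa [T, toLpLin_apply] using congrArg WithLp.ofLp (LinearMap.mem_ker.1 hx)
    rcases isEmpty_or_nonempty ι with _ | ⟨⟨i₀⟩⟩
    · simp [EuclideanSpace.inner_eq_star_dotProduct]
    · simp [EuclideanSpace.inner_eq_star_dotProduct, dotProduct,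
        eq_of_graphLap_eq_zero hsym hnonneg hconn hx' _ i₀, ← Finset.sum_mul, hm]
  obtain ⟨z, hz⟩ := hm'
  refine ⟨z.ofLp, ?_⟩
  rw [graphLap_eq_mulVec]
  simpa [T, toLpLin_apply] using congrArg WithLp.ofLp hz

lemma exists_graphLap_eq_of_sum_eq_zero {α β : Type*} (hsym : ∀ i j, a i j = a j i)
    (hnonneg : ∀ i j, 0 ≤ a i j) (hconn : ∀ i j, Relation.ReflTransGen (fun u v => 0 < a u v) i j)
    (m : ι → Matrix α β ℝ) (hm : ∑ i, m i = 0) : ∃ z : ι → Matrix α β ℝ, graphLap a z = m := by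
  have hentry : ∀ k l, ∃ z : ι → ℝ, graphLap a z = fun i => m i k l := fun k l =>
    exists_graphLap_eq hsym hnonneg hconn _ (by simpa [Matrix.sum_apply] using congrFun₂ hm k l)
  choose z hz using hentry
  refine ⟨fun i => Matrix.of fun k l => z k l i, ?_⟩
  ext i k l
  simpa [graphLap_apply, Matrix.sum_apply] using congrFun (hz k l) i

end GraphLaplacian

section Blocks

variable {n : ℕ} {d : Fin n → ℕ} {β : Type*}

lemma embedRow_add (i : Fin n) (M N : Matrix (Fin (d i)) β ℝ) :
    embedRow i (M + N) = embedRow i M + embedRow i N := by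
  ext s j
  simp only [embedRow, Matrix.of_apply, Matrix.add_apply]
  split_ifs <;> simp

lemma embedRow_smul (i : Fin n) (t : ℝ) (M : Matrix (Fin (d i)) β ℝ) :
    embedRow i (t • M) = t • embedRow i M := by
  ext s j
  simp only [embedRow, Matrix.of_apply, Matrix.smul_apply]
  split_ifs <;> simp

lemma embedRow_zero (i : Fin n) : embedRow i (0 : Matrix (Fin (d i)) β ℝ) = 0 := by
  simpa using embedRow_smul i 0 (0 : Matrix (Fin (d i)) β ℝ)

lemma rowBlk_blockRows (M : ∀ i, Matrix (Fin (d i)) β ℝ) (i : Fin n) :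
    rowBlk (blockRows M) i = M i := rfl

lemma sum_embedRow_rowBlk (M : Matrix ((i : Fin n) × Fin (d i)) β ℝ) :
    ∑ i, embedRow i (rowBlk M i) = M := by
  ext ⟨s, k⟩ j
  rw [Matrix.sum_apply, Fintype.sum_eq_single s fun i hi => by simp [embedRow, Ne.symm hi]]
  simp [embedRow, rowBlk]

variable [Fintype β]

lemma frobInner_embedRow_right (M : Matrix ((i : Fin n) × Fin (d i)) β ℝ) (i : Fin n)
    (N : Matrix (Fin (d i)) β ℝ) : frobInner M (embedRow i N) = frobInner (rowBlk M i) N := by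
  rw [frobInner_eq_sum, frobInner_eq_sum, Fintype.sum_sigma,
    Fintype.sum_eq_single i fun s hs => by simp [embedRow, hs]]
  simp [embedRow, rowBlk]

lemma sum_frobInner_rowBlk (M N : Matrix ((i : Fin n) × Fin (d i)) β ℝ) :
    ∑ i, frobInner (rowBlk M i) (rowBlk N i) = frobInner M N := by
  simp only [← frobInner_embedRow_right, ← frobInner_sum_right, sum_embedRow_rowBlk]

end Blocks

section CRR

variable {n q : ℕ} {rdim mdim pdim : Fin n → ℕ}

def CRRres (Al : ∀ i, Matrix ((i' : Fin n) × Fin (mdim i')) (Fin (rdim i)) ℝ)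
    (Fv : ∀ i, Matrix (Fin (mdim i)) (Fin q) ℝ) (Yv : ∀ i, Matrix (Fin (rdim i)) (Fin q) ℝ)
    (U : Fin n → Matrix ((i : Fin n) × Fin (mdim i)) (Fin q) ℝ) (i : Fin n) :
    Matrix ((i : Fin n) × Fin (mdim i)) (Fin q) ℝ :=
  Al i * Yv i - embedRow i (Fv i) - U i

/-- First-order optimality condition; the constraints being homogeneous, the feasible directions
are the feasible points. -/
def CRRstationary (a : Matrix (Fin n) (Fin n) ℝ)
    (Al : ∀ i, Matrix ((i' : Fin n) × Fin (mdim i')) (Fin (rdim i)) ℝ)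
    (Bv : ∀ i, Matrix (Fin (pdim i)) (Fin q) ℝ) (Fv : ∀ i, Matrix (Fin (mdim i)) (Fin q) ℝ)
    (Yv : ∀ i, Matrix (Fin (rdim i)) (Fin q) ℝ)
    (U : Fin n → Matrix ((i : Fin n) × Fin (mdim i)) (Fin q) ℝ) : Prop :=
  ∀ (Xl' : ∀ i, Matrix ((i' : Fin n) × Fin (rdim i')) (Fin (pdim i)) ℝ)
    (Yv' : ∀ i, Matrix (Fin (rdim i)) (Fin q) ℝ)
    (Z' : Fin n → Matrix ((i : Fin n) × Fin (rdim i)) (Fin q) ℝ)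
    (U' W' : Fin n → Matrix ((i : Fin n) × Fin (mdim i)) (Fin q) ℝ),
    CRRfeas a Bv Xl' Yv' Z' U' W' →
      ∑ i, frobInner (CRRres Al Fv Yv U i) (Al i * Yv' i - U' i) = 0

/-- The Karush–Kuhn–Tucker conditions, with multipliers `L1 = Λ¹` and `L2 = Λ²`. -/
def CRRkkt (a : Matrix (Fin n) (Fin n) ℝ)
    (Al : ∀ i, Matrix ((i' : Fin n) × Fin (mdim i')) (Fin (rdim i)) ℝ)
    (Bv : ∀ i, Matrix (Fin (pdim i)) (Fin q) ℝ) (Fv : ∀ i, Matrix (Fin (mdim i)) (Fin q) ℝ)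
    (Yv : ∀ i, Matrix (Fin (rdim i)) (Fin q) ℝ)
    (U L1 : Fin n → Matrix ((i : Fin n) × Fin (mdim i)) (Fin q) ℝ)
    (L2 : Fin n → Matrix ((i : Fin n) × Fin (rdim i)) (Fin q) ℝ) : Prop :=
  ∀ i, CRRrhsX Bv L2 i = 0 ∧ CRRrhsY Al Fv Yv U L2 i = 0 ∧ CRRrhsU Al Fv Yv U L1 i = 0 ∧
    CRRrhsW a L1 i = 0 ∧ CRRrhsZ a L2 i = 0

variable {a : Matrix (Fin n) (Fin n) ℝ}
  {Al : ∀ i, Matrix ((i' : Fin n) × Fin (mdim i')) (Fin (rdim i)) ℝ}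
  {Bv : ∀ i, Matrix (Fin (pdim i)) (Fin q) ℝ} {Fv : ∀ i, Matrix (Fin (mdim i)) (Fin q) ℝ}
  {Xl Xl' : ∀ i, Matrix ((i' : Fin n) × Fin (rdim i')) (Fin (pdim i)) ℝ}
  {Yv Yv' : ∀ i, Matrix (Fin (rdim i)) (Fin q) ℝ}
  {Z Z' : Fin n → Matrix ((i : Fin n) × Fin (rdim i)) (Fin q) ℝ}
  {U W U' W' L1 : Fin n → Matrix ((i : Fin n) × Fin (mdim i)) (Fin q) ℝ}
  {L2 : Fin n → Matrix ((i : Fin n) × Fin (rdim i)) (Fin q) ℝ}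

lemma CRRfeas_iff : CRRfeas a Bv Xl Yv Z U W ↔
    (∀ i, embedRow i (Yv i) - Xl i * Bv i - graphLap a Z i = 0) ∧ ∀ i, U i = graphLap a W i :=
  Iff.rfl

lemma CRRfeas.add_smul (h : CRRfeas a Bv Xl Yv Z U W) (h' : CRRfeas a Bv Xl' Yv' Z' U' W')
    (t : ℝ) :
    CRRfeas a Bv (Xl + t • Xl') (Yv + t • Yv') (Z + t • Z') (U + t • U') (W + t • W') := by
  rw [CRRfeas_iff] at h h' ⊢
  refine ⟨fun i => ?_, fun i => ?_⟩
  · have hsplit : embedRow i ((Yv + t • Yv') i) - (Xl + t • Xl') i * Bv i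
          - graphLap a (Z + t • Z') i
        = (embedRow i (Yv i) - Xl i * Bv i - graphLap a Z i)
          + t • (embedRow i (Yv' i) - Xl' i * Bv i - graphLap a Z' i) := by
      simp only [Pi.add_apply, Pi.smul_apply, embedRow_add, embedRow_smul, Matrix.add_mul,
        Matrix.smul_mul, map_add, map_smul]
      module
    rw [hsplit, h.1 i, h'.1 i, smul_zero, add_zero]
  · simp [h.2 i, h'.2 i]

lemma CRRres_add_smul (t : ℝ) (i : Fin n) :
    CRRres Al Fv (Yv + t • Yv') (U + t • U') i
      = CRRres Al Fv Yv U i + t • (Al i * Yv' i - U' i) := by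
  simp only [CRRres, Pi.add_apply, Pi.smul_apply, Matrix.mul_add, Matrix.mul_smul]
  module

lemma CRRobj_eq : CRRobj Al Fv Yv U = ∑ i, frobSq (CRRres Al Fv Yv U i) := rfl

theorem CRRopt_iff :
    (CRRfeas a Bv Xl Yv Z U W ∧
        ∀ Xl' : ∀ i, Matrix ((i' : Fin n) × Fin (rdim i')) (Fin (pdim i)) ℝ,
          ∀ Yv' : ∀ i, Matrix (Fin (rdim i)) (Fin q) ℝ,
            ∀ Z' : Fin n → Matrix ((i : Fin n) × Fin (rdim i)) (Fin q) ℝ,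
              ∀ U' W' : Fin n → Matrix ((i : Fin n) × Fin (mdim i)) (Fin q) ℝ,
                CRRfeas a Bv Xl' Yv' Z' U' W' →
                  CRRobj Al Fv Yv U ≤ CRRobj Al Fv Yv' U') ↔
      CRRfeas a Bv Xl Yv Z U W ∧ CRRstationary a Al Bv Fv Yv U := by
  refine and_congr_right fun hfeas =>
    ⟨fun hopt Xl' Yv' Z' U' W' hdir => ?_, fun hstat Xl' Yv' Z' U' W' hfeas' => ?_⟩
  · refine (forall_sum_frobSq_le_add_smul_iff _ _).1 fun t => ?_
    simpa only [CRRobj_eq, CRRres_add_smul] using hopt _ _ _ _ _ (hfeas.add_smul hdir t)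
  · have hdir := hfeas'.add_smul hfeas (-1)
    simp only [neg_one_smul, ← sub_eq_add_neg] at hdir
    have hres : ∀ i, CRRres Al Fv Yv' U' i
        = CRRres Al Fv Yv U i + (1 : ℝ) • (Al i * (Yv' - Yv) i - (U' - U) i) := fun i => by
      rw [← CRRres_add_smul]; simp only [one_smul, add_sub_cancel]
    simpa only [CRRobj_eq, hres] using
      (forall_sum_frobSq_le_add_smul_iff _ _).2 (hstat _ _ _ _ _ hdir) 1

lemma CRRrhsL1_eq {i : Fin n} (hU : CRRrhsU Al Fv Yv U L1 i = 0) (hW : CRRrhsW a L1 i = 0) :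
    CRRrhsL1 a Al Fv Yv U W L1 i = U i - graphLap a W i := by
  change U i + CRRrhsU Al Fv Yv U L1 i - graphLap a W i - CRRrhsW a L1 i = _
  rw [hU, hW, add_zero, sub_zero]

lemma CRRrhsL2_eq {i : Fin n} (hX : CRRrhsX Bv L2 i = 0) (hY : CRRrhsY Al Fv Yv U L2 i = 0)
    (hZ : CRRrhsZ a L2 i = 0) :
    CRRrhsL2 a Al Bv Fv Xl Yv Z U L2 i = embedRow i (Yv i) - Xl i * Bv i - graphLap a Z i := by
  change embedRow i (Yv i) + embedRow i (CRRrhsY Al Fv Yv U L2 i) - Xl i * Bv i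
    - graphLap a Z i - CRRrhsZ a L2 i - CRRrhsX Bv L2 i * Bv i = _
  rw [hX, hY, hZ, embedRow_zero, Matrix.zero_mul, add_zero, sub_zero, sub_zero]

lemma CRRequil_iff :
    CRRequil a Al Bv Fv Xl Yv Z U W L1 L2 ↔
      CRRfeas a Bv Xl Yv Z U W ∧ CRRkkt a Al Bv Fv Yv U L1 L2 := by
  constructor
  · intro h
    refine ⟨⟨fun i => ?_, fun i => ?_⟩, fun i => ?_⟩
    · obtain ⟨hX, hY, -, -, hZ, -, hL2⟩ := h i
      rwa [CRRrhsL2_eq hX hY hZ] at hL2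
    · obtain ⟨-, -, hU, hW, -, hL1, -⟩ := h i
      rw [CRRrhsL1_eq hU hW] at hL1
      exact sub_eq_zero.1 hL1
    · obtain ⟨hX, hY, hU, hW, hZ, -⟩ := h i
      exact ⟨hX, hY, hU, hW, hZ⟩
  · rintro ⟨⟨hfeas₁, hfeas₂⟩, h⟩ i
    obtain ⟨hX, hY, hU, hW, hZ⟩ := h i
    refine ⟨hX, hY, hU, hW, hZ, ?_, ?_⟩
    · rw [CRRrhsL1_eq hU hW, hfeas₂ i]
      exact sub_self _
    · rw [CRRrhsL2_eq hX hY hZ]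
      exact hfeas₁ i

/-- Weak duality: the multipliers certify stationarity, since against a feasible direction the
residual pairs to `Σ ⟨Λ²_i B_iᵀ, ΔX_i⟩ + Σ ⟨L Λ², ΔZ⟩ + Σ ⟨L Λ¹, ΔW⟩` up to sign. -/
theorem CRRstationary_of_CRRkkt (hsym : ∀ i j, a i j = a j i)
    (h : CRRkkt a Al Bv Fv Yv U L1 L2) : CRRstationary a Al Bv Fv Yv U := by
  intro ΔX ΔY ΔZ ΔU ΔW hdir
  rw [CRRfeas_iff] at hdir
  have hX : ∀ i, L2 i * (Bv i)ᵀ = 0 := fun i => (h i).1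
  have hres : ∀ i, CRRres Al Fv Yv U i = L1 i := fun i => sub_eq_zero.1 (h i).2.2.1
  have hW : graphLap a L1 = 0 := funext fun i => (h i).2.2.2.1
  have hZ : graphLap a L2 = 0 := funext fun i => (h i).2.2.2.2
  have hY : ∀ i, (Al i)ᵀ * L1 i = -rowBlk (L2 i) i := fun i =>
    eq_neg_of_add_eq_zero_left <| neg_eq_zero.1 <| by
      rw [neg_add', ← hres]
      exact (h i).2.1
  have hembed : ∀ i, embedRow i (ΔY i) = ΔX i * Bv i + graphLap a ΔZ i := fun i =>
    sub_eq_zero.1 <| by rw [← sub_sub]; exact hdir.1 i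
  calc ∑ i, frobInner (CRRres Al Fv Yv U i) (Al i * ΔY i - ΔU i)
      = -∑ i, frobInner (L2 i) (embedRow i (ΔY i))
          - ∑ i, frobInner (graphLap a L1 i) (ΔW i) := by
        simp only [hres, hdir.2, frobInner_sub_right, frobInner_mul_right_eq_transpose_mul, hY,
          frobInner_neg_left, frobInner_embedRow_right, Finset.sum_sub_distrib,
          Finset.sum_neg_distrib, sum_frobInner_graphLap hsym]
    _ = 0 := by
        simp only [hembed, frobInner_add_right, frobInner_mul_right_eq_mul_transpose,
          Finset.sum_add_distrib, sum_frobInner_graphLap hsym, hX, hZ, hW, Pi.zero_apply,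
          frobInner_zero_left, Finset.sum_const_zero, add_zero, neg_zero, sub_zero]

theorem graphLap_CRRres_eq_zero (hsym : ∀ i j, a i j = a j i)
    (h : CRRstationary a Al Bv Fv Yv U) :
    graphLap a (CRRres Al Fv Yv U) = 0 := by
  set R := CRRres Al Fv Yv U
  have hdir : CRRfeas (rdim := rdim) a Bv 0 0 0 (graphLap a (graphLap a R)) (graphLap a R) :=
    ⟨fun i => by simp [embedRow_zero], fun i => rfl⟩
  have hsq : ∑ i, frobSq (graphLap a R i) = 0 := by
    have := h _ _ _ _ _ hdir
    simp only [Pi.zero_apply, Matrix.mul_zero, zero_sub, frobInner_neg_right,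
      Finset.sum_neg_distrib, neg_eq_zero] at this
    rwa [sum_frobInner_graphLap hsym] at this
  have := (Fintype.sum_eq_zero_iff_of_nonneg fun i => frobSq_nonneg _).1 hsq
  exact funext fun i => frobSq_eq_zero_iff.1 (congrFun this i)

/-- Moving `X_{li}` along `G` and `Y_v` along the row blocks of `G B_{vi}` keeps the coupling
constraint feasible once `Z` absorbs the (zero-sum) defect; for `G = Λ B_{vi}ᵀ` the first-order
condition becomes `‖G‖² = 0`. -/
theorem blockRows_mul_transpose_eq_zero (hsym : ∀ i j, a i j = a j i)
    (hnonneg : ∀ i j, 0 ≤ a i j)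
    (hconn : ∀ i j, Relation.ReflTransGen (fun u v => 0 < a u v) i j)
    (h : CRRstationary a Al Bv Fv Yv U) (i : Fin n) :
    blockRows (fun k => -((Al k)ᵀ * CRRres Al Fv Yv U k)) * (Bv i)ᵀ = 0 := by
  set Λ := blockRows (fun k => -((Al k)ᵀ * CRRres Al Fv Yv U k))
  set G := Λ * (Bv i)ᵀ
  let ΔX : ∀ k, Matrix ((i' : Fin n) × Fin (rdim i')) (Fin (pdim k)) ℝ := Pi.single i G
  let ΔY : ∀ k, Matrix (Fin (rdim k)) (Fin q) ℝ := rowBlk (G * Bv i)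
  have hsum : ∑ k, (embedRow k (ΔY k) - ΔX k * Bv k) = 0 := by
    rw [Finset.sum_sub_distrib, sum_embedRow_rowBlk,
      Fintype.sum_eq_single i fun k hk => by simp [ΔX, hk]]
    simp [ΔX]
  obtain ⟨ΔZ, hΔZ⟩ := exists_graphLap_eq_of_sum_eq_zero hsym hnonneg hconn _ hsum
  have hdir : CRRfeas (mdim := mdim) a Bv ΔX ΔY ΔZ 0 0 :=
    CRRfeas_iff.2 ⟨fun k => by rw [hΔZ]; exact sub_self _, fun k => by simp⟩
  have hpair : ∑ k, frobInner (CRRres Al Fv Yv U k) (Al k * ΔY k - (0 : Fin n → _) k)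
      = -frobSq G :=
    calc _ = -∑ k, frobInner (rowBlk Λ k) (rowBlk (G * Bv i) k) := by
          simp only [Pi.zero_apply, sub_zero, frobInner_mul_right_eq_transpose_mul, Λ,
            rowBlk_blockRows, frobInner_neg_left, Finset.sum_neg_distrib, neg_neg, ΔY]
      _ = -frobSq G := by rw [sum_frobInner_rowBlk, frobInner_mul_right_eq_mul_transpose]; rfl
  exact frobSq_eq_zero_iff.1 (neg_eq_zero.1 (hpair ▸ h _ _ _ _ _ hdir))

theorem exists_CRRkkt_of_CRRstationary (hsym : ∀ i j, a i j = a j i)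
    (hnonneg : ∀ i j, 0 ≤ a i j)
    (hconn : ∀ i j, Relation.ReflTransGen (fun u v => 0 < a u v) i j)
    (h : CRRstationary a Al Bv Fv Yv U) :
    ∃ L1 L2, CRRkkt a Al Bv Fv Yv U L1 L2 := by
  refine ⟨CRRres Al Fv Yv U, fun _ => blockRows (fun k => -((Al k)ᵀ * CRRres Al Fv Yv U k)),
    fun i => ⟨blockRows_mul_transpose_eq_zero hsym hnonneg hconn h i, ?_, sub_self _,
      congrFun (graphLap_CRRres_eq_zero hsym h) i, by simp [CRRrhsZ]⟩⟩
  rw [CRRrhsY, rowBlk_blockRows]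
  exact sub_self _

end CRR

theorem stmt_16_general (n q : ℕ) (rdim mdim pdim : Fin n → ℕ)
    (a : Matrix (Fin n) (Fin n) ℝ)
    (hsym : ∀ i j, a i j = a j i) (hnonneg : ∀ i j, 0 ≤ a i j)
    (hconn : GraphConnected a)
    (Al : ∀ i, Matrix ((i' : Fin n) × Fin (mdim i')) (Fin (rdim i)) ℝ)
    (Bv : ∀ i, Matrix (Fin (pdim i)) (Fin q) ℝ)
    (Fv : ∀ i, Matrix (Fin (mdim i)) (Fin q) ℝ)
    (Xl : ∀ i, Matrix ((i' : Fin n) × Fin (rdim i')) (Fin (pdim i)) ℝ)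
    (Yv : ∀ i, Matrix (Fin (rdim i)) (Fin q) ℝ)
    (Z : Fin n → Matrix ((i : Fin n) × Fin (rdim i)) (Fin q) ℝ)
    (U W : Fin n → Matrix ((i : Fin n) × Fin (mdim i)) (Fin q) ℝ) :
    (CRRfeas a Bv Xl Yv Z U W ∧
        ∀ Xl' : ∀ i, Matrix ((i' : Fin n) × Fin (rdim i')) (Fin (pdim i)) ℝ,
          ∀ Yv' : ∀ i, Matrix (Fin (rdim i)) (Fin q) ℝ,
            ∀ Z' : Fin n → Matrix ((i : Fin n) × Fin (rdim i)) (Fin q) ℝ,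
              ∀ U' W' : Fin n → Matrix ((i : Fin n) × Fin (mdim i)) (Fin q) ℝ,
                CRRfeas a Bv Xl' Yv' Z' U' W' →
                  CRRobj Al Fv Yv U ≤ CRRobj Al Fv Yv' U') ↔
      (∃ L1 : Fin n → Matrix ((i : Fin n) × Fin (mdim i)) (Fin q) ℝ,
        ∃ L2 : Fin n → Matrix ((i : Fin n) × Fin (rdim i)) (Fin q) ℝ,
          CRRequil a Al Bv Fv Xl Yv Z U W L1 L2) := by
  have hconn' : ∀ i j, Relation.ReflTransGen (fun u v => 0 < a u v) i j := fun i j =>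
    Relation.ReflTransGen.mono (fun _ _ huv => huv.2) _ _ (hconn i j)
  simp only [CRRopt_iff, CRRequil_iff]
  constructor
  · rintro ⟨hfeas, hstat⟩
    obtain ⟨L1, L2, hkkt⟩ := exists_CRRkkt_of_CRRstationary hsym hnonneg hconn' hstat
    exact ⟨L1, L2, hfeas, hkkt⟩
  · rintro ⟨L1, L2, hfeas, hkkt⟩
    exact ⟨hfeas, CRRstationary_of_CRRkkt hsym hkkt⟩

theorem stmt_16 (n q : ℕ) (hn : 0 < n) (rdim mdim pdim : Fin n → ℕ)
    (a : Matrix (Fin n) (Fin n) ℝ)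
    (hsym : ∀ i j, a i j = a j i) (hnonneg : ∀ i j, 0 ≤ a i j)
    (hdiag : ∀ i, a i i = 0) (hconn : GraphConnected a)
    (Al : ∀ i, Matrix ((i' : Fin n) × Fin (mdim i')) (Fin (rdim i)) ℝ)
    (Bv : ∀ i, Matrix (Fin (pdim i)) (Fin q) ℝ)
    (Fv : ∀ i, Matrix (Fin (mdim i)) (Fin q) ℝ)
    (Xl : ∀ i, Matrix ((i' : Fin n) × Fin (rdim i')) (Fin (pdim i)) ℝ)
    (Yv : ∀ i, Matrix (Fin (rdim i)) (Fin q) ℝ)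
    (Z : Fin n → Matrix ((i : Fin n) × Fin (rdim i)) (Fin q) ℝ)
    (U W : Fin n → Matrix ((i : Fin n) × Fin (mdim i)) (Fin q) ℝ) :
    (CRRfeas a Bv Xl Yv Z U W ∧
        ∀ Xl' : ∀ i, Matrix ((i' : Fin n) × Fin (rdim i')) (Fin (pdim i)) ℝ,
          ∀ Yv' : ∀ i, Matrix (Fin (rdim i)) (Fin q) ℝ,
            ∀ Z' : Fin n → Matrix ((i : Fin n) × Fin (rdim i)) (Fin q) ℝ,
              ∀ U' W' : Fin n → Matrix ((i : Fin n) × Fin (mdim i)) (Fin q) ℝ,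
                CRRfeas a Bv Xl' Yv' Z' U' W' →
                  CRRobj Al Fv Yv U ≤ CRRobj Al Fv Yv' U') ↔
      (∃ L1 : Fin n → Matrix ((i : Fin n) × Fin (mdim i)) (Fin q) ℝ,
        ∃ L2 : Fin n → Matrix ((i : Fin n) × Fin (rdim i)) (Fin q) ℝ,
          CRRequil a Al Bv Fv Xl Yv Z U W L1 L2) :=
  stmt_16_general n q rdim mdim pdim a hsym hnonneg hconn Al Bv Fv Xl Yv Z U W
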